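/- For any smooth matrix-valued field F : ℝ³ → M₃(ℝ), the identity div(Ξ F) = 2 vskw(curl F) holds, where div is row-wise divergence, curl is row-wise curl, and Ξ(M) = Mᵀ - tr(M)·I. -/

import Mathlib

/-- The partial derivative `∂ⱼ f` at `x` of a scalar field on ℝ³. -/
noncomputable def pd (j : Fin 3) (f : (Fin 3 → ℝ) → ℝ) (x : Fin 3 → ℝ) : ℝ :=
  fderiv ℝ f x (Pi.single j 1)

/-- The row-wise curl of a matrix field `F`, as a matrix: row `i` is the curl of row `i` of `F`. -/
noncomputable def curlRow (F : (Fin 3 → ℝ) → Fin 3 → Fin 3 → ℝ) (x : Fin 3 → ℝ)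
    (i : Fin 3) : Fin 3 → ℝ :=
  ![pd 1 (fun y => F y i 2) x - pd 2 (fun y => F y i 1) x,
    pd 2 (fun y => F y i 0) x - pd 0 (fun y => F y i 2) x,
    pd 0 (fun y => F y i 1) x - pd 1 (fun y => F y i 0) x]

/-- `vskw M = (1/2)(m₃₂-m₂₃, m₁₃-m₃₁, m₂₁-m₁₂)`. -/
noncomputable def vskwF (M : Fin 3 → Fin 3 → ℝ) : Fin 3 → ℝ :=
  ![(M 2 1 - M 1 2) / 2, (M 0 2 - M 2 0) / 2, (M 1 0 - M 0 1) / 2]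

/-- `Ξ M = Mᵀ - tr(M)·I`, written entrywise. -/
noncomputable def XiF (M : Fin 3 → Fin 3 → ℝ) : Fin 3 → Fin 3 → ℝ :=
  fun i j => M j i - (if i = j then (∑ k, M k k) else 0)

lemma pd_sub (f g : (Fin 3 → ℝ) → ℝ) (hf : Differentiable ℝ f) (hg : Differentiable ℝ g)
    (j : Fin 3) (x : Fin 3 → ℝ) :
    pd j (fun y => f y - g y) x = pd j f x - pd j g x := by
  simp [pd, fderiv_fun_sub (hf x) (hg x)]

lemma pd_add (f g : (Fin 3 → ℝ) → ℝ) (hf : Differentiable ℝ f) (hg : Differentiable ℝ g)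
    (j : Fin 3) (x : Fin 3 → ℝ) :
    pd j (fun y => f y + g y) x = pd j f x + pd j g x := by
  simp [pd, fderiv_fun_add (hf x) (hg x)]

/-- For any smooth matrix field `F : ℝ³ → M₃(ℝ)`, `div (Ξ F) = 2 vskw (curl F)`,
where `div` is the row-wise divergence and `curl` the row-wise curl. -/
theorem stmt3 (F : (Fin 3 → ℝ) → Fin 3 → Fin 3 → ℝ)
    (hF : ∀ i j, ContDiff ℝ (⊤ : ℕ∞) fun y => F y i j) (x : Fin 3 → ℝ) (i : Fin 3) :
    ∑ j, pd j (fun y => XiF (F y) i j) x = 2 * vskwF (curlRow F x) i := by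
  have hd : ∀ a b, Differentiable ℝ fun y => F y a b := fun a b =>
    (hF a b).differentiable (by simp)
  have hsum : Differentiable ℝ fun y => F y 0 0 + F y 1 1 + F y 2 2 :=
    ((hd 0 0).add (hd 1 1)).add (hd 2 2)
  have key : ∀ a b : Fin 3, pd b (fun y => XiF (F y) a b) x =
      pd b (fun y => F y b a) x -
        (if a = b then pd b (fun y => F y 0 0 + F y 1 1 + F y 2 2) x else 0) := by
    intro a b
    by_cases h : a = b
    · subst h
      simp only [XiF, eq_self_iff_true, if_true, Fin.sum_univ_three]
      rw [pd_sub _ _ (hd a a) hsum a x]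
    · simp [XiF, h]
  have hsplit : ∀ b : Fin 3, pd b (fun y => F y 0 0 + F y 1 1 + F y 2 2) x =
      pd b (fun y => F y 0 0) x + pd b (fun y => F y 1 1) x + pd b (fun y => F y 2 2) x := by
    intro b
    rw [pd_add (fun y => F y 0 0 + F y 1 1) _ ((hd 0 0).add (hd 1 1)) (hd 2 2), pd_add _ _ (hd 0 0) (hd 1 1)]
  simp only [Fin.sum_univ_three, key, hsplit]
  fin_cases i <;>
    simp [vskwF, curlRow, Fin.sum_univ_three] <;> ring
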